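/- Let M be a Markov chain with n = |S| states, absorbing targets T, and weight function w : T → [0,∞), in which every state can reach T along edges, and let val be its weighted reachability value vector and L its reachability Bellman update. Then for every vector v : S → ℝ with v(t) = w(t) for all t ∈ T and every integer t ≥ 1: ‖L^{n·t} v − val‖_∞ ≤ (1 − p_min^n)^t · ‖v − val‖_∞. -/

import Mathlib

/-- A finite Markov chain: transition function `δ` (nonnegative, rows sum to 1)
together with a set `T` of absorbing target states. There is an edge `s → s'`
iff `δ s s' > 0`. -/
structure MC (S : Type) [Fintype S] [DecidableEq S] where
  δ : S → S → ℝ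
  T : Finset S
  nonneg : ∀ s s' : S, 0 ≤ δ s s'
  rowsum : ∀ s : S, ∑ s' : S, δ s s' = 1
  absorbing : ∀ t ∈ T, δ t t = 1

variable {S : Type} [Fintype S] [DecidableEq S]

/-- Edge relation of a Markov chain: `s → s'` iff `δ s s' > 0`. -/
def MC.edge (M : MC S) (a b : S) : Prop := 0 < M.δ a b

/-- `pathLen r n a b`: there is a path of length `n` from `a` to `b` along `r`. -/
def pathLen (r : S → S → Prop) : ℕ → S → S → Prop
  | 0 => fun a b => a = b
  | n + 1 => fun a c => ∃ b, r a b ∧ pathLen r n b c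

/-- `reaches r A s`: `s` can reach the set `A` along the relation `r`. -/
def reaches (r : S → S → Prop) (A : Set S) (s : S) : Prop :=
  ∃ n, ∃ a ∈ A, pathLen r n s a

/-- Length of a shortest path from `s` to the set `A` along `r`. -/
noncomputable def distTo (r : S → S → Prop) (A : Set S) (s : S) : ℕ :=
  sInf {n | ∃ a ∈ A, pathLen r n s a}

/-- Level `0`: the targets together with all states that cannot reach the targets. -/
def MC.level0 (M : MC S) : Set S :=
  {s | s ∈ M.T ∨ ¬ reaches M.edge (M.T : Set S) s}

/-- The levels of a Markov chain: `ℓ_0` is `level0`, and for `i ≥ 1`, `ℓ_i` is the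
set of states whose shortest edge-path distance to `ℓ_0` is exactly `i`. -/
noncomputable def MC.levelSet (M : MC S) : ℕ → Set S
  | 0 => M.level0
  | i + 1 => {s | distTo M.edge M.level0 s = i + 1}

/-- `M` has (exactly) `k` levels: `ℓ_k` is the last nonempty level. -/
def MC.hasLevels (M : MC S) (k : ℕ) : Prop :=
  (M.levelSet k).Nonempty ∧ ∀ i, k < i → M.levelSet i = ∅

/-- One-step transition matrix of the Markov chain. -/
noncomputable def MC.P (M : MC S) : Matrix S S ℝ := Matrix.of M.δ

/-- Weighted reachability value `val(s) = E_s[w(X_{t*}) · 1{t* < ∞}]`, where `t*` is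
the first hitting time of `T`. Since `T` is absorbing, this equals the supremum
(monotone limit) over `n` of `∑_{t ∈ T} (δⁿ)(s,t)·w(t)`. -/
noncomputable def MC.reachVal (M : MC S) (w : S → ℝ) (s : S) : ℝ :=
  ⨆ n : ℕ, ∑ t ∈ M.T, (M.P ^ n) s t * w t

/-- Stochastic shortest path value `val(s) = E_s[∑_{t=0}^{t*} w(X_t)]`, where `t*` is
the first hitting time of `T`: the expected weight collected strictly before `T`
(states outside `T`, counted via the `n`-step distributions) plus the expected weight
of the first target state hit. -/
noncomputable def MC.sspVal (M : MC S) (w : S → ℝ) (s : S) : ℝ :=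
  (∑' n : ℕ, ∑ s' ∈ Finset.univ.filter (fun x => x ∉ M.T), (M.P ^ n) s s' * w s')
    + M.reachVal w s

/-- Smallest positive transition probability of the Markov chain. -/
noncomputable def MC.pmin (M : MC S) : ℝ :=
  sInf {p : ℝ | 0 < p ∧ ∃ s s' : S, M.δ s s' = p}

/-- Reachability Bellman update. -/
noncomputable def MC.reachUpdate (M : MC S) (w : S → ℝ) (v : S → ℝ) : S → ℝ :=
  fun s => if s ∈ M.T then w s else ∑ s' : S, M.δ s s' * v s'

/-- SSP Bellman update. -/
noncomputable def MC.sspUpdate (M : MC S) (w : S → ℝ) (v : S → ℝ) : S → ℝ :=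
  fun s => if s ∈ M.T then w s else w s + ∑ s' : S, M.δ s s' * v s'

/-- The reduced Markov chain `M[s = ·]`: the state `s` is made absorbing (its row of
`δ` replaced by the point mass at `s`) and added to the target set. -/
def MC.reduce (M : MC S) (s : S) : MC S where
  δ := fun a b => if a = s then (if b = s then 1 else 0) else M.δ a b
  T := insert s M.T
  nonneg := by
    intro a b
    by_cases h : a = s
    · by_cases h' : b = s <;> simp [h, h']
    · simpa [h] using M.nonneg a b
  rowsum := by
    intro a
    by_cases h : a = s
    · simp [h]
    · simpa [h] using M.rowsum a
  absorbing := by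
    intro t ht
    rcases Finset.mem_insert.mp ht with h | h
    · simp [h]
    · by_cases h' : t = s
      · simp [h']
      · simpa [h'] using M.absorbing t h

/-- Probability, in `M`, of ever visiting the state `s` when starting from `a`,
i.e. `P_a(∃ t ≥ 0, X_t = s)` (computed as a reachability value after making `s`
absorbing, which does not change the dynamics before the first visit to `s`). -/
noncomputable def MC.hitProb (M : MC S) (a s : S) : ℝ :=
  (M.reduce s).reachVal (fun b => if b = s then 1 else 0) a

/-- Probability of having reached `T` within `i` steps, `P_s(∃ t ≤ i, X_t ∈ T)`;
since `T` is absorbing this equals `∑_{t ∈ T} (δ^i)(s,t)`. -/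
noncomputable def MC.hitBy (M : MC S) (s : S) (i : ℕ) : ℝ :=
  ∑ t ∈ M.T, (M.P ^ i) s t

/-!
Write `e_k = L^k v - val`. As `val` is a fixed point of `L` and `v = w = val` on `T`, the error
`e_k` vanishes on `T` and satisfies `e_{k+1}(s) = ∑ δ(s,s') e_k(s')` off `T`; in particular
`‖e_k‖_∞ ≤ ‖e_0‖_∞`. If `s` has an edge path of length `k` into `T`, its first edge carries
probability at least `p_min`, and induction on `k` gives `|e_k(s)| ≤ (1 - p_min^k) ‖e_0‖_∞`.
Every state has such a path of length exactly `n`: a shortest one has fewer than `n` steps by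
pigeonhole, and targets carry self-loops. Hence `‖e_n‖_∞ ≤ (1 - p_min^n) ‖e_0‖_∞`, and applying
this `t` times gives the claim.
-/

theorem pathLen_add_iff {α : Type} {r : α → α → Prop} {m n : ℕ} {a c : α} :
    pathLen r (m + n) a c ↔ ∃ b, pathLen r m a b ∧ pathLen r n b c := by
  induction m generalizing a with
  | zero => simp [pathLen]
  | succ m ih =>
    rw [Nat.succ_add]
    simp only [pathLen, ih]
    constructor
    · rintro ⟨b, hab, d, hbd, hdc⟩
      exact ⟨d, ⟨b, hab, hbd⟩, hdc⟩
    · rintro ⟨d, ⟨b, hab, hbd⟩, hdc⟩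
      exact ⟨b, hab, d, hbd, hdc⟩

theorem pathLen_self {α : Type} {r : α → α → Prop} {a : α} (h : r a a) (n : ℕ) :
    pathLen r n a a := by
  induction n with
  | zero => rfl
  | succ n ih => exact ⟨a, h, ih⟩

theorem exists_pathLen_lt_card {α : Type} [Fintype α] {r : α → α → Prop} {a c : α} {k : ℕ}
    (h : pathLen r k a c) : ∃ j < Fintype.card α, pathLen r j a c := by
  induction k using Nat.strong_induction_on with
  | _ k ih =>
    by_cases hk : k < Fintype.card α
    · exact ⟨k, hk, h⟩
    -- Among the `k + 1 > |α|` states visited at times `0, …, k` one repeats; cut out the loop.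
    have hvisit : ∀ i : Fin (k + 1), ∃ b, pathLen r i a b ∧ pathLen r (k - i) b c := fun i =>
      pathLen_add_iff.1 (by rwa [Nat.add_sub_cancel' (Nat.lt_succ_iff.1 i.isLt)])
    choose f hf₁ hf₂ using hvisit
    obtain ⟨i, j, hij, hf⟩ := Fintype.exists_ne_map_eq_of_card_lt f (by rw [Fintype.card_fin]; omega)
    wlog hlt : i < j generalizing i j
    · exact this j i hij.symm hf.symm (lt_of_le_of_ne (not_lt.1 hlt) hij.symm)
    have hj := j.isLt
    exact ih (i + (k - j)) (by omega) (pathLen_add_iff.2 ⟨f i, hf₁ i, hf ▸ hf₂ j⟩)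

namespace MC

variable (M : MC S)

theorem P_mem_rowStochastic : M.P ∈ Matrix.rowStochastic ℝ S :=
  Matrix.mem_rowStochastic_iff_sum.2 ⟨M.nonneg, M.rowsum⟩

theorem edge_of_mem {t : S} (ht : t ∈ M.T) : M.edge t t := by
  rw [edge, M.absorbing t ht]
  exact one_pos

theorem exists_pathLen_card {s : S} (h : reaches M.edge M.T s) :
    ∃ a ∈ M.T, pathLen M.edge (Fintype.card S) s a := by
  obtain ⟨k, a, ha, hk⟩ := h
  obtain ⟨j, hj, hpath⟩ := exists_pathLen_lt_card hk
  have := pathLen_add_iff.2 ⟨a, hpath, pathLen_self (M.edge_of_mem ha) (Fintype.card S - j)⟩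
  exact ⟨a, ha, by rwa [Nat.add_sub_cancel' hj.le] at this⟩

theorem sum_delta_mul_of_mem {t : S} (ht : t ∈ M.T) (f : S → ℝ) :
    ∑ x, M.δ t x * f x = f t := by
  have hrow := Finset.add_sum_erase Finset.univ (M.δ t) (Finset.mem_univ t)
  rw [M.rowsum, M.absorbing t ht] at hrow
  have hzero : ∀ x ∈ Finset.univ.erase t, M.δ t x = 0 :=
    (Finset.sum_eq_zero_iff_of_nonneg fun x _ => M.nonneg t x).1 (by linarith)
  rw [Finset.sum_eq_single t (fun x _ hx => by rw [hzero x (by simpa using hx), zero_mul])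
    (by simp), M.absorbing t ht, one_mul]

theorem pmin_le_delta {s s' : S} (h : M.edge s s') : M.pmin ≤ M.δ s s' :=
  csInf_le ⟨0, fun _ hp => hp.1.le⟩ ⟨h, s, s', rfl⟩

theorem pmin_nonneg : 0 ≤ M.pmin :=
  Real.sInf_nonneg fun _ hp => hp.1.le

theorem pmin_le_one : M.pmin ≤ 1 := by
  rcases Set.eq_empty_or_nonempty {p : ℝ | 0 < p ∧ ∃ s s' : S, M.δ s s' = p} with
    h | ⟨_, hp, s, s', rfl⟩
  · simp [pmin, h]
  · exact (M.pmin_le_delta hp).trans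
      (Matrix.le_one_of_mem_rowStochastic M.P_mem_rowStochastic)

theorem one_sub_pmin_pow_nonneg (n : ℕ) : 0 ≤ 1 - M.pmin ^ n :=
  sub_nonneg.2 (pow_le_one₀ M.pmin_nonneg M.pmin_le_one)

noncomputable def reachApprox (w : S → ℝ) (n : ℕ) (s : S) : ℝ :=
  ∑ t ∈ M.T, (M.P ^ n) s t * w t

theorem reachApprox_succ (w : S → ℝ) (n : ℕ) (s : S) :
    M.reachApprox w (n + 1) s = ∑ x, M.δ s x * M.reachApprox w n x := by
  simp only [reachApprox, pow_succ', Matrix.mul_apply, Finset.sum_mul, Finset.mul_sum, mul_assoc]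
  exact Finset.sum_comm

theorem reachApprox_of_mem (w : S → ℝ) (n : ℕ) {t : S} (ht : t ∈ M.T) :
    M.reachApprox w n t = w t := by
  induction n with
  | zero => simp [reachApprox, Matrix.one_apply, ht]
  | succ n ih => rw [reachApprox_succ, M.sum_delta_mul_of_mem ht, ih]

variable {M} {w : S → ℝ}

theorem reachApprox_mono (hw : ∀ t ∈ M.T, 0 ≤ w t) (s : S) :
    Monotone (M.reachApprox w · s) := by
  refine monotone_nat_of_le_succ fun n => Finset.sum_le_sum fun t ht => ?_
  refine mul_le_mul_of_nonneg_right ?_ (hw t ht)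
  have hPt : M.P t t = 1 := M.absorbing t ht
  calc (M.P ^ n) s t = (M.P ^ n) s t * M.P t t := by rw [hPt, mul_one]
    _ ≤ ∑ x, (M.P ^ n) s x * M.P x t :=
      Finset.single_le_sum (f := fun x => (M.P ^ n) s x * M.P x t)
        (fun x _ => mul_nonneg (Matrix.nonneg_of_mem_rowStochastic
          (pow_mem M.P_mem_rowStochastic n)) (M.nonneg x t)) (Finset.mem_univ t)
    _ = (M.P ^ (n + 1)) s t := by rw [pow_succ, Matrix.mul_apply]

theorem reachApprox_le (hw : ∀ t ∈ M.T, 0 ≤ w t) (n : ℕ) (s : S) :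
    M.reachApprox w n s ≤ ∑ t ∈ M.T, w t :=
  Finset.sum_le_sum fun t ht => mul_le_of_le_one_left (hw t ht)
    (Matrix.le_one_of_mem_rowStochastic (pow_mem M.P_mem_rowStochastic n))

theorem tendsto_reachApprox (hw : ∀ t ∈ M.T, 0 ≤ w t) (s : S) :
    Filter.Tendsto (M.reachApprox w · s) Filter.atTop (nhds (M.reachVal w s)) :=
  tendsto_atTop_ciSup (reachApprox_mono hw s)
    ⟨_, Set.forall_mem_range.2 fun n => reachApprox_le hw n s⟩

theorem reachVal_of_mem {t : S} (ht : t ∈ M.T) : M.reachVal w t = w t := by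
  change ⨆ n, M.reachApprox w n t = w t
  simp only [M.reachApprox_of_mem w _ ht, ciSup_const]

theorem reachUpdate_reachVal (hw : ∀ t ∈ M.T, 0 ≤ w t) :
    M.reachUpdate w (M.reachVal w) = M.reachVal w := by
  funext s
  by_cases hs : s ∈ M.T
  · simp [reachUpdate, hs, reachVal_of_mem]
  simp only [reachUpdate, if_neg hs]
  refine tendsto_nhds_unique ?_ ((tendsto_reachApprox hw s).comp (Filter.tendsto_add_atTop_nat 1))
  simp only [Function.comp_def, reachApprox_succ]
  exact tendsto_finsetSum _ fun x _ => (tendsto_reachApprox hw x).const_mul _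

theorem reachUpdate_sub_reachVal (hw : ∀ t ∈ M.T, 0 ≤ w t) (u : S → ℝ) {s : S} (hs : s ∉ M.T) :
    M.reachUpdate w u s - M.reachVal w s = ∑ x, M.δ s x * (u x - M.reachVal w x) := by
  have hfix := congrFun (reachUpdate_reachVal hw) s
  simp only [reachUpdate, if_neg hs] at hfix ⊢
  rw [← hfix, ← Finset.sum_sub_distrib]
  simp only [mul_sub]

theorem iterate_reachUpdate_eqOn {v : S → ℝ} (hv : Set.EqOn v w M.T) (k : ℕ) :
    Set.EqOn ((M.reachUpdate w)^[k] v) w M.T := by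
  intro t ht
  cases k with
  | zero => exact hv ht
  | succ k => simp [Function.iterate_succ_apply', reachUpdate, Finset.mem_coe.1 ht]

theorem iterate_sub_reachVal_of_mem {v : S → ℝ} (hv : Set.EqOn v w M.T) (k : ℕ) {t : S}
    (ht : t ∈ M.T) : (M.reachUpdate w)^[k] v t - M.reachVal w t = 0 := by
  rw [iterate_reachUpdate_eqOn hv k ht, reachVal_of_mem ht, sub_self]

variable (M)

theorem abs_sum_delta_mul_le_of_abs_le {e : S → ℝ} {C r : ℝ} (s b : S) (he : ∀ x, |e x| ≤ C)
    (hb : |e b| ≤ (1 - r) * C) : |∑ x, M.δ s x * e x| ≤ (1 - M.δ s b * r) * C := by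
  have he' : ∀ x, |e x| ≤ C - if x = b then r * C else 0 := fun x => by
    split_ifs with hx
    · rw [hx]; linarith
    · simpa using he x
  calc |∑ x, M.δ s x * e x| ≤ ∑ x, M.δ s x * |e x| := by
        refine (Finset.abs_sum_le_sum_abs _ _).trans_eq ?_
        simp only [abs_mul, abs_of_nonneg (M.nonneg s _)]
    _ ≤ ∑ x, M.δ s x * (C - if x = b then r * C else 0) := by
        gcongr with x
        · exact M.nonneg s x
        · exact he' x
    _ = (1 - M.δ s b * r) * C := by
        simp only [mul_sub, Finset.sum_sub_distrib, mul_ite, mul_zero, Finset.sum_ite_eq',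
          Finset.mem_univ, if_true, ← Finset.sum_mul, M.rowsum]
        ring

theorem abs_sum_delta_mul_le {e : S → ℝ} {C : ℝ} (s : S) (he : ∀ x, |e x| ≤ C) :
    |∑ x, M.δ s x * e x| ≤ C := by
  simpa using M.abs_sum_delta_mul_le_of_abs_le (r := 0) s s he (by simpa using he s)

variable {M}

theorem norm_iterate_sub_reachVal_le (hw : ∀ t ∈ M.T, 0 ≤ w t) {v : S → ℝ}
    (hv : Set.EqOn v w M.T) (k : ℕ) :
    ‖(M.reachUpdate w)^[k] v - M.reachVal w‖ ≤ ‖v - M.reachVal w‖ := by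
  induction k with
  | zero => rfl
  | succ k ih =>
    refine (pi_norm_le_iff_of_nonneg (norm_nonneg _)).2 fun s => ?_
    rw [Real.norm_eq_abs, Pi.sub_apply]
    by_cases hs : s ∈ M.T
    · rw [iterate_sub_reachVal_of_mem hv _ hs, abs_zero]
      exact norm_nonneg _
    rw [Function.iterate_succ_apply', reachUpdate_sub_reachVal hw _ hs]
    exact M.abs_sum_delta_mul_le s fun x => (norm_le_pi_norm _ x).trans ih

theorem abs_iterate_sub_reachVal_le_of_pathLen (hw : ∀ t ∈ M.T, 0 ≤ w t) {v : S → ℝ}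
    (hv : Set.EqOn v w M.T) {k : ℕ} {s a : S} (ha : a ∈ M.T) (hpath : pathLen M.edge k s a) :
    |(M.reachUpdate w)^[k] v s - M.reachVal w s| ≤ (1 - M.pmin ^ k) * ‖v - M.reachVal w‖ := by
  induction k generalizing s with
  | zero =>
    obtain rfl : s = a := hpath
    rw [iterate_sub_reachVal_of_mem hv 0 ha, abs_zero, pow_zero, sub_self, zero_mul]
  | succ k ih =>
    by_cases hs : s ∈ M.T
    · rw [iterate_sub_reachVal_of_mem hv _ hs, abs_zero]
      exact mul_nonneg (M.one_sub_pmin_pow_nonneg _) (norm_nonneg _)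
    obtain ⟨b, hsb, hb⟩ := hpath
    rw [Function.iterate_succ_apply', reachUpdate_sub_reachVal hw _ hs]
    refine (M.abs_sum_delta_mul_le_of_abs_le s b (fun x => ?_) (ih hb)).trans ?_
    · exact (norm_le_pi_norm _ x).trans (norm_iterate_sub_reachVal_le hw hv k)
    · gcongr
      rw [pow_succ']
      exact mul_le_mul_of_nonneg_right (M.pmin_le_delta hsb) (pow_nonneg M.pmin_nonneg k)

theorem norm_iterate_card_sub_reachVal_le (hreach : ∀ a : S, reaches M.edge M.T a)
    (hw : ∀ t ∈ M.T, 0 ≤ w t) {v : S → ℝ} (hv : Set.EqOn v w M.T) :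
    ‖(M.reachUpdate w)^[Fintype.card S] v - M.reachVal w‖
      ≤ (1 - M.pmin ^ Fintype.card S) * ‖v - M.reachVal w‖ := by
  refine (pi_norm_le_iff_of_nonneg
    (mul_nonneg (M.one_sub_pmin_pow_nonneg _) (norm_nonneg _))).2 fun s => ?_
  obtain ⟨a, ha, hpath⟩ := M.exists_pathLen_card (hreach s)
  exact abs_iterate_sub_reachVal_le_of_pathLen hw hv ha hpath

end MC

theorem stmt_18_general {S : Type} [Fintype S] [DecidableEq S]
    (M : MC S) (hreach : ∀ a : S, reaches M.edge (M.T : Set S) a)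
    (w : S → ℝ) (hw : ∀ t ∈ M.T, 0 ≤ w t) :
    ∀ v : S → ℝ, (∀ t ∈ M.T, v t = w t) → ∀ t : ℕ, 1 ≤ t →
      ‖(M.reachUpdate w)^[Fintype.card S * t] v - M.reachVal w‖
        ≤ (1 - M.pmin ^ (Fintype.card S)) ^ t * ‖v - M.reachVal w‖ := by
  rintro v hv t -
  induction t with
  | zero => simp
  | succ t ih =>
    rw [Nat.mul_succ, add_comm, Function.iterate_add_apply, pow_succ', mul_assoc]
    calc _ ≤ (1 - M.pmin ^ Fintype.card S) *
          ‖(M.reachUpdate w)^[Fintype.card S * t] v - M.reachVal w‖ :=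
          MC.norm_iterate_card_sub_reachVal_le hreach hw (MC.iterate_reachUpdate_eqOn hv _)
      _ ≤ _ := mul_le_mul_of_nonneg_left ih (M.one_sub_pmin_pow_nonneg _)

/-- Contraction property of value iteration: with `n = |S|`, for any
starting vector `v` agreeing with `w` on `T` and any `t ≥ 1`,
`‖L^{n·t} v - val‖_∞ ≤ (1 - p_min^n)^t · ‖v - val‖_∞`. -/
theorem stmt_18 {S : Type} [Fintype S] [DecidableEq S] [Nonempty S]
    (M : MC S) (hreach : ∀ a : S, reaches M.edge (M.T : Set S) a)
    (w : S → ℝ) (hw : ∀ t ∈ M.T, 0 ≤ w t) :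
    ∀ v : S → ℝ, (∀ t ∈ M.T, v t = w t) → ∀ t : ℕ, 1 ≤ t →
      ‖(M.reachUpdate w)^[Fintype.card S * t] v - M.reachVal w‖
        ≤ (1 - M.pmin ^ (Fintype.card S)) ^ t * ‖v - M.reachVal w‖ :=
  stmt_18_general M hreach w hw
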